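/- arXiv:2503.10266 — 8 statements merged into one kernel-verified Lean document; each statement's English description precedes it below -/
import Mathlib

section
/- Let x₀ > 0, α > 0, δ₁, δ₂ ∈ ℝ, and f(x) = (α x₀^α / x^{α+1}) [ (3 - 2δ₁ - δ₂) + (6δ₁ + 4δ₂ - 6)(x₀/x)^α + (3 - 3δ₁ - 3δ₂)(x₀/x)^{2α} ] for x ≥ x₀. Then ∫_{x₀}^{∞} f(x) dx = 1. -/
open MeasureTheory Real Set

theorem stmt_5 (x₀ α δ₁ δ₂ : ℝ) (hx₀ : 0 < x₀) (hα : 0 < α) :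
    ∫ x in Set.Ioi x₀,
        α * x₀ ^ α / x ^ (α + 1) *
          ((3 - 2 * δ₁ - δ₂) + (6 * δ₁ + 4 * δ₂ - 6) * (x₀ / x) ^ α
            + (3 - 3 * δ₁ - 3 * δ₂) * (x₀ / x) ^ (2 * α)) = 1 := by
  set c1 : ℝ := 3 - 2 * δ₁ - δ₂ with hc1
  set c2 : ℝ := 6 * δ₁ + 4 * δ₂ - 6 with hc2
  set c3 : ℝ := 3 - 3 * δ₁ - 3 * δ₂ with hc3
  have key : ∀ x ∈ Ioi x₀,
      α * x₀ ^ α / x ^ (α + 1) * (c1 + c2 * (x₀ / x) ^ α + c3 * (x₀ / x) ^ (2 * α))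
        = (α * x₀ ^ α * c1) * x ^ (-(α + 1))
          + (α * x₀ ^ (2 * α) * c2) * x ^ (-(2 * α + 1))
          + (α * x₀ ^ (3 * α) * c3) * x ^ (-(3 * α + 1)) := by
    intro x hx
    have hxpos : 0 < x := hx₀.trans hx
    have hxa : (0:ℝ) < x ^ (α + 1) := rpow_pos_of_pos hxpos _
    have hxb : (0:ℝ) < x ^ α := rpow_pos_of_pos hxpos _
    have e1 : (x₀ / x) ^ α = x₀ ^ α / x ^ α := div_rpow hx₀.le hxpos.le α
    have e2 : (x₀ / x) ^ (2 * α) = x₀ ^ (2 * α) / x ^ (2 * α) :=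
      div_rpow hx₀.le hxpos.le (2*α)
    have h2x : x ^ (2 * α) = x ^ α * x ^ α := by
      rw [← rpow_add hxpos]; ring_nf
    have h2x0 : x₀ ^ (2 * α) = x₀ ^ α * x₀ ^ α := by
      rw [← rpow_add hx₀]; ring_nf
    have h3x0 : x₀ ^ (3 * α) = x₀ ^ α * x₀ ^ α * x₀ ^ α := by
      rw [← rpow_add hx₀, ← rpow_add hx₀]; ring_nf
    have hA : x ^ (-(α + 1)) = (x ^ (α + 1))⁻¹ := by rw [rpow_neg hxpos.le]
    have hB : x ^ (-(2 * α + 1)) = (x ^ (α + 1) * (x ^ α))⁻¹ := by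
      rw [rpow_neg hxpos.le, ← rpow_add hxpos]; ring_nf
    have hC : x ^ (-(3 * α + 1)) = (x ^ (α + 1) * (x ^ α * x ^ α))⁻¹ := by
      rw [rpow_neg hxpos.le, ← rpow_add hxpos, ← rpow_add hxpos]; ring_nf
    rw [e1, e2, h2x, h2x0, h3x0, hA, hB, hC]
    field_simp
  rw [setIntegral_congr_fun measurableSet_Ioi key]
  have ha1 : -(α + 1) < -1 := by linarith
  have ha2 : -(2 * α + 1) < -1 := by linarith
  have ha3 : -(3 * α + 1) < -1 := by linarith
  have i1 := (integrableOn_Ioi_rpow_of_lt ha1 hx₀).const_mul (α * x₀ ^ α * c1)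
  have i2 := (integrableOn_Ioi_rpow_of_lt ha2 hx₀).const_mul (α * x₀ ^ (2 * α) * c2)
  have i3 := (integrableOn_Ioi_rpow_of_lt ha3 hx₀).const_mul (α * x₀ ^ (3 * α) * c3)
  have i12 : MeasureTheory.IntegrableOn (fun x => α * x₀ ^ α * c1 * x ^ (-(α + 1))
      + α * x₀ ^ (2 * α) * c2 * x ^ (-(2 * α + 1))) (Ioi x₀) := i1.add i2
  rw [integral_add i12 i3, integral_add i1 i2, integral_const_mul,
    integral_const_mul, integral_const_mul,
    integral_Ioi_rpow_of_lt ha1 hx₀, integral_Ioi_rpow_of_lt ha2 hx₀,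
    integral_Ioi_rpow_of_lt ha3 hx₀]
  have h1 : -(α + 1) + 1 = -α := by ring
  have h2 : -(2 * α + 1) + 1 = -(2 * α) := by ring
  have h3 : -(3 * α + 1) + 1 = -(3 * α) := by ring
  rw [h1, h2, h3, rpow_neg hx₀.le, rpow_neg hx₀.le, rpow_neg hx₀.le]
  have p1 : (0:ℝ) < x₀ ^ α := rpow_pos_of_pos hx₀ _
  have p2 : (0:ℝ) < x₀ ^ (2 * α) := rpow_pos_of_pos hx₀ _
  have p3 : (0:ℝ) < x₀ ^ (3 * α) := rpow_pos_of_pos hx₀ _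
  field_simp
  ring
end

section
/- Let k be a positive integer, x₀ > 0, α > k, and δ₁, δ₂ ∈ ℝ. For the cubic transmuted Pareto pdf f(x) = (α x₀^α / x^{α+1}) [ (3 - 2δ₁ - δ₂) + (6δ₁ + 4δ₂ - 6)(x₀/x)^α + (3 - 3δ₁ - 3δ₂)(x₀/x)^{2α} ], we have ∫_{x₀}^{∞} x^k f(x) dx = α x₀^k [ (-δ₁ k² + (5δ₁ + 2δ₂) k α - 6α²) / ((k - α)(k - 2α)(k - 3α)) ]. -/
set_option maxHeartbeats 1000000

open Real MeasureTheory

theorem stmt_6 (k : ℕ) (hk : 0 < k) (x₀ α δ₁ δ₂ : ℝ) (hx₀ : 0 < x₀) (hα : (k : ℝ) < α) :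
    ∫ x in Set.Ioi x₀,
        x ^ (k : ℕ) * (α * x₀ ^ α / x ^ (α + 1) *
          ((3 - 2 * δ₁ - δ₂) + (6 * δ₁ + 4 * δ₂ - 6) * (x₀ / x) ^ α
            + (3 - 3 * δ₁ - 3 * δ₂) * (x₀ / x) ^ (2 * α))) =
      α * x₀ ^ (k : ℕ) *
        ((-δ₁ * (k : ℝ) ^ 2 + (5 * δ₁ + 2 * δ₂) * (k : ℝ) * α - 6 * α ^ 2) /
          (((k : ℝ) - α) * ((k : ℝ) - 2 * α) * ((k : ℝ) - 3 * α))) := by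
  have hk1 : (1 : ℝ) ≤ (k : ℝ) := by exact_mod_cast hk
  have hαpos : (0 : ℝ) < α := lt_of_le_of_lt (by linarith) hα
  set a₁ : ℝ := (k : ℝ) - (α + 1) with ha₁
  set a₂ : ℝ := (k : ℝ) - (2 * α + 1) with ha₂
  set a₃ : ℝ := (k : ℝ) - (3 * α + 1) with ha₃
  have h1 : a₁ < -1 := by rw [ha₁]; linarith
  have h2 : a₂ < -1 := by rw [ha₂]; linarith
  have h3 : a₃ < -1 := by rw [ha₃]; linarith
  set c₁ : ℝ := α * x₀ ^ α * (3 - 2 * δ₁ - δ₂) with hc₁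
  set c₂ : ℝ := α * x₀ ^ α * x₀ ^ α * (6 * δ₁ + 4 * δ₂ - 6) with hc₂
  set c₃ : ℝ := α * x₀ ^ α * x₀ ^ (2 * α) * (3 - 3 * δ₁ - 3 * δ₂) with hc₃
  have key : ∫ x in Set.Ioi x₀,
        x ^ (k : ℕ) * (α * x₀ ^ α / x ^ (α + 1) *
          ((3 - 2 * δ₁ - δ₂) + (6 * δ₁ + 4 * δ₂ - 6) * (x₀ / x) ^ α
            + (3 - 3 * δ₁ - 3 * δ₂) * (x₀ / x) ^ (2 * α)))
      = ∫ x in Set.Ioi x₀, (c₁ * x ^ a₁ + c₂ * x ^ a₂ + c₃ * x ^ a₃) := by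
    refine setIntegral_congr_fun measurableSet_Ioi (fun x hx => ?_)
    have hx0 : (0 : ℝ) < x := lt_trans hx₀ hx
    have e0 : x ^ (k : ℕ) = x ^ ((k : ℕ) : ℝ) := (rpow_natCast x k).symm
    have e1 : x ^ a₁ = x ^ ((k : ℝ)) / (x ^ α * x) := by
      rw [ha₁, rpow_sub hx0, rpow_add hx0, rpow_one]
    have e2 : x ^ a₂ = x ^ ((k : ℝ)) / (x ^ α * x ^ α * x) := by
      rw [ha₂, rpow_sub hx0]
      congr 1
      rw [show 2 * α + 1 = α + α + 1 by ring, rpow_add hx0, rpow_add hx0, rpow_one]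
    have e3 : x ^ a₃ = x ^ ((k : ℝ)) / (x ^ α * x ^ (2 * α) * x) := by
      rw [ha₃, rpow_sub hx0]
      congr 1
      rw [show 3 * α + 1 = α + 2 * α + 1 by ring, rpow_add hx0, rpow_add hx0, rpow_one]
    have e4 : x ^ (α + 1) = x ^ α * x := by rw [rpow_add hx0, rpow_one]
    have e5 : (x₀ / x) ^ α = x₀ ^ α / x ^ α := div_rpow hx₀.le hx0.le α
    have e6 : (x₀ / x) ^ (2 * α) = x₀ ^ (2 * α) / x ^ (2 * α) :=
      div_rpow hx₀.le hx0.le (2*α)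
    have hxα : x ^ α ≠ 0 := (rpow_pos_of_pos hx0 α).ne'
    have hx2α : x ^ (2 * α) ≠ 0 := (rpow_pos_of_pos hx0 (2 * α)).ne'
    rw [e0, e1, e2, e3, e4, e5, e6, hc₁, hc₂, hc₃]
    field_simp
  rw [key]
  have i1 : IntegrableOn (fun x : ℝ => x ^ a₁) (Set.Ioi x₀) :=
    integrableOn_Ioi_rpow_of_lt h1 hx₀
  have i2 : IntegrableOn (fun x : ℝ => x ^ a₂) (Set.Ioi x₀) :=
    integrableOn_Ioi_rpow_of_lt h2 hx₀
  have i3 : IntegrableOn (fun x : ℝ => x ^ a₃) (Set.Ioi x₀) :=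
    integrableOn_Ioi_rpow_of_lt h3 hx₀
  have I1 : Integrable (fun x : ℝ => c₁ * x ^ a₁) (volume.restrict (Set.Ioi x₀)) :=
    i1.const_mul c₁
  have I2 : Integrable (fun x : ℝ => c₂ * x ^ a₂) (volume.restrict (Set.Ioi x₀)) :=
    i2.const_mul c₂
  have I3 : Integrable (fun x : ℝ => c₃ * x ^ a₃) (volume.restrict (Set.Ioi x₀)) :=
    i3.const_mul c₃
  have I12 : Integrable (fun x : ℝ => c₁ * x ^ a₁ + c₂ * x ^ a₂)
      (volume.restrict (Set.Ioi x₀)) := I1.add I2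
  rw [integral_add I12 I3, integral_add I1 I2,
    integral_const_mul, integral_const_mul, integral_const_mul,
    integral_Ioi_rpow_of_lt h1 hx₀, integral_Ioi_rpow_of_lt h2 hx₀,
    integral_Ioi_rpow_of_lt h3 hx₀]
  have p1 : x₀ ^ (a₁ + 1) = x₀ ^ ((k : ℝ)) / x₀ ^ α := by
    rw [ha₁, show (k : ℝ) - (α + 1) + 1 = (k : ℝ) - α by ring, rpow_sub hx₀]
  have p2 : x₀ ^ (a₂ + 1) = x₀ ^ ((k : ℝ)) / (x₀ ^ α * x₀ ^ α) := by
    rw [ha₂, show (k : ℝ) - (2 * α + 1) + 1 = (k : ℝ) - (α + α) by ring,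
      rpow_sub hx₀, rpow_add hx₀]
  have p3 : x₀ ^ (a₃ + 1) = x₀ ^ ((k : ℝ)) / (x₀ ^ α * x₀ ^ (2 * α)) := by
    rw [ha₃, show (k : ℝ) - (3 * α + 1) + 1 = (k : ℝ) - (α + 2 * α) by ring,
      rpow_sub hx₀, rpow_add hx₀]
  have pk : x₀ ^ ((k : ℝ)) = x₀ ^ (k : ℕ) := rpow_natCast x₀ k
  have hd1 : a₁ + 1 ≠ 0 := by rw [ha₁]; intro h; linarith [hα]
  have hd2 : a₂ + 1 ≠ 0 := by rw [ha₂]; intro h; linarith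
  have hd3 : a₃ + 1 ≠ 0 := by rw [ha₃]; intro h; linarith
  rw [p1, p2, p3, pk, hc₁, hc₂, hc₃, ha₁, ha₂, ha₃]
  have hxα : x₀ ^ α ≠ 0 := (rpow_pos_of_pos hx₀ α).ne'
  have hx2α : x₀ ^ (2 * α) ≠ 0 := (rpow_pos_of_pos hx₀ (2 * α)).ne'
  have hq1 : (k : ℝ) - α ≠ 0 := by intro h; linarith
  have hq2 : (k : ℝ) - 2 * α ≠ 0 := by intro h; linarith
  have hq3 : (k : ℝ) - 3 * α ≠ 0 := by intro h; linarith
  have hr1 : (k : ℝ) - (α + 1) + 1 ≠ 0 := by intro h; linarith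
  have hr2 : (k : ℝ) - (2 * α + 1) + 1 ≠ 0 := by intro h; linarith
  have hr3 : (k : ℝ) - (3 * α + 1) + 1 ≠ 0 := by intro h; linarith
  rw [show (k : ℝ) - (α + 1) + 1 = (k : ℝ) - α by ring,
    show (k : ℝ) - (2 * α + 1) + 1 = (k : ℝ) - 2 * α by ring,
    show (k : ℝ) - (3 * α + 1) + 1 = (k : ℝ) - 3 * α by ring]
  have hq2' : (k : ℝ) - α * 2 ≠ 0 := by intro h; linarith
  have hq3' : (k : ℝ) - α * 3 ≠ 0 := by intro h; linarith
  field_simp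
  ring
end

section
/- For x₀ > 0, α > 1 and δ₁, δ₂ ∈ ℝ, the mean of the cubic transmuted Pareto distribution with pdf f(x) = (α x₀^α / x^{α+1}) [ (3 - 2δ₁ - δ₂) + (6δ₁ + 4δ₂ - 6)(x₀/x)^α + (3 - 3δ₁ - 3δ₂)(x₀/x)^{2α} ] is E(X) = ∫_{x₀}^∞ x f(x) dx = α x₀ (-δ₁ + (5δ₁ + 2δ₂)α - 6α²) / ((1-α)(1-2α)(1-3α)). -/
open Real Set MeasureTheory

theorem stmt_7 (x₀ α δ₁ δ₂ : ℝ) (hx₀ : 0 < x₀) (hα : 1 < α) :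
    ∫ x in Set.Ioi x₀,
        x * (α * x₀ ^ α / x ^ (α + 1) *
          ((3 - 2 * δ₁ - δ₂) + (6 * δ₁ + 4 * δ₂ - 6) * (x₀ / x) ^ α
            + (3 - 3 * δ₁ - 3 * δ₂) * (x₀ / x) ^ (2 * α))) =
      α * x₀ * (-δ₁ + (5 * δ₁ + 2 * δ₂) * α - 6 * α ^ 2) /
        ((1 - α) * (1 - 2 * α) * (1 - 3 * α)) := by
  have hb : 0 < x₀ ^ α := Real.rpow_pos_of_pos hx₀ α
  have h1 : α - 1 ≠ 0 := by nlinarith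
  have h2 : 2*α - 1 ≠ 0 := by nlinarith
  have h3 : 3*α - 1 ≠ 0 := by nlinarith
  have key : EqOn (fun x : ℝ => x * (α * x₀ ^ α / x ^ (α + 1) *
          ((3 - 2 * δ₁ - δ₂) + (6 * δ₁ + 4 * δ₂ - 6) * (x₀ / x) ^ α
            + (3 - 3 * δ₁ - 3 * δ₂) * (x₀ / x) ^ (2 * α))))
      (fun x : ℝ => α * (3 - 2*δ₁ - δ₂) * x₀ ^ α * x ^ (-α)
        + (α * (6*δ₁ + 4*δ₂ - 6) * (x₀ ^ α)^2 * x ^ (-(2*α))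
          + α * (3 - 3*δ₁ - 3*δ₂) * (x₀ ^ α)^3 * x ^ (-(3*α)))) (Ioi x₀) := by
    intro x hx
    have hxp : 0 < x := hx₀.trans hx
    have ha : 0 < x ^ α := Real.rpow_pos_of_pos hxp α
    have e1 : x ^ (α + 1) = x ^ α * x := by
      rw [Real.rpow_add hxp, Real.rpow_one]
    have e2 : (x₀ / x) ^ (2*α) = ((x₀/x) ^ α)^2 := by
      rw [mul_comm, Real.rpow_mul (by positivity), Real.rpow_two]
    have e3 : x ^ (-α) = (x ^ α)⁻¹ := by rw [Real.rpow_neg hxp.le]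
    have e4 : x ^ (-(2*α)) = ((x ^ α)^2)⁻¹ := by
      rw [Real.rpow_neg hxp.le, mul_comm, Real.rpow_mul hxp.le, Real.rpow_two]
    have e5 : x ^ (-(3*α)) = ((x ^ α)^3)⁻¹ := by
      rw [Real.rpow_neg hxp.le, mul_comm, Real.rpow_mul hxp.le,
        show (3:ℝ) = ((3:ℕ):ℝ) by norm_num, Real.rpow_natCast]
    have e6 : (x₀ / x) ^ α = x₀ ^ α / x ^ α := Real.div_rpow hx₀.le hxp.le α
    simp only [e1, e2, e3, e4, e5, e6]
    field_simp
    ring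
  rw [setIntegral_congr_fun measurableSet_Ioi key]
  have i1 : IntegrableOn (fun x : ℝ => x ^ (-α)) (Ioi x₀) :=
    integrableOn_Ioi_rpow_of_lt (by linarith) hx₀
  have i2 : IntegrableOn (fun x : ℝ => x ^ (-(2*α))) (Ioi x₀) :=
    integrableOn_Ioi_rpow_of_lt (by linarith) hx₀
  have i3 : IntegrableOn (fun x : ℝ => x ^ (-(3*α))) (Ioi x₀) :=
    integrableOn_Ioi_rpow_of_lt (by linarith) hx₀
  have i23 : IntegrableOn (fun x : ℝ =>
      α * (6*δ₁ + 4*δ₂ - 6) * (x₀ ^ α)^2 * x ^ (-(2*α))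
        + α * (3 - 3*δ₁ - 3*δ₂) * (x₀ ^ α)^3 * x ^ (-(3*α))) (Ioi x₀) :=
    (i2.const_mul _).add (i3.const_mul _)
  rw [integral_add ((i1.const_mul _)) i23,
      integral_add (i2.const_mul _) (i3.const_mul _),
      integral_const_mul, integral_const_mul, integral_const_mul,
      integral_Ioi_rpow_of_lt (by linarith : -α < -1) hx₀,
      integral_Ioi_rpow_of_lt (by linarith : -(2*α) < -1) hx₀,
      integral_Ioi_rpow_of_lt (by linarith : -(3*α) < -1) hx₀]
  have p1 : x₀ ^ (-α + 1) = (x₀ ^ α)⁻¹ * x₀ := by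
    rw [Real.rpow_add hx₀, Real.rpow_one, Real.rpow_neg hx₀.le]
  have p2 : x₀ ^ (-(2*α) + 1) = ((x₀ ^ α)^2)⁻¹ * x₀ := by
    rw [Real.rpow_add hx₀, Real.rpow_one, Real.rpow_neg hx₀.le, mul_comm 2 α,
      Real.rpow_mul hx₀.le, Real.rpow_two]
  have p3 : x₀ ^ (-(3*α) + 1) = ((x₀ ^ α)^3)⁻¹ * x₀ := by
    rw [Real.rpow_add hx₀, Real.rpow_one, Real.rpow_neg hx₀.le, mul_comm 3 α,
      Real.rpow_mul hx₀.le, show (3:ℝ) = ((3:ℕ):ℝ) by norm_num, Real.rpow_natCast]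
  rw [p1, p2, p3]
  have d1 : (-α + 1) ≠ 0 := by intro h; apply h1; linarith
  have d2 : (-(2*α) + 1) ≠ 0 := by intro h; apply h2; linarith
  have d3 : (-(3*α) + 1) ≠ 0 := by intro h; apply h3; linarith
  have hne : (1 - α) * (1 - 2 * α) * (1 - 3 * α) ≠ 0 := by
    apply mul_ne_zero
    apply mul_ne_zero
    · intro h; apply h1; linarith
    · intro h; apply h2; linarith
    · intro h; apply h3; linarith
  have e1' : (1 - α) ≠ 0 := by intro h; apply h1; linarith
  have e2' : (1 - α * 2) ≠ 0 := by intro h; apply h2; linarith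
  have e3' : (1 - α * 3) ≠ 0 := by intro h; apply h3; linarith
  rw [show -α + 1 = 1 - α by ring, show -(2 * α) + 1 = 1 - 2 * α by ring,
    show -(3 * α) + 1 = 1 - 3 * α by ring]
  field_simp
  ring
end

section
/- For -1 ≤ λ ≤ 3, the function r(t) = (1+λ) - 4λ t + 3λ t² is nonnegative for all t ∈ [0,1]. -/
/-!
Since `r(t) = 1 + λ q(t)` with `q(t) = (1 - t)(1 - 3t)`, and `q` takes values in `[-1/3, 1]` on
`[0, 1]` (minimum at `t = 2/3`, maximum at `t = 0`), nonnegativity reduces to `1 + λ q ≥ 0`, which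
holds at the extreme products `(-1) · 1` and `3 · (-1/3)`.
-/

lemma neg_one_third_le_one_sub_mul_one_sub_three_mul (t : ℝ) :
    -1 / 3 ≤ (1 - t) * (1 - 3 * t) := by
  nlinarith [sq_nonneg (t - 2 / 3)]

lemma one_sub_mul_one_sub_three_mul_le_one {t : ℝ} (h0 : 0 ≤ t) (h1 : t ≤ 4 / 3) :
    (1 - t) * (1 - 3 * t) ≤ 1 := by
  nlinarith [mul_nonneg h0 (sub_nonneg.2 h1)]

lemma one_add_mul_nonneg {lam q : ℝ} (hl₁ : -1 ≤ lam) (hl₂ : lam ≤ 3) (hq₁ : -1 / 3 ≤ q)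
    (hq₂ : q ≤ 1) : 0 ≤ 1 + lam * q := by
  rcases le_total 0 q with hq | hq
  · nlinarith [mul_nonneg (neg_le_iff_add_nonneg.1 hl₁) hq]
  · nlinarith [mul_nonneg (sub_nonneg.2 hl₂) (neg_nonneg.2 hq)]

theorem stmt_10 (lam : ℝ) (h1 : -1 ≤ lam) (h2 : lam ≤ 3) :
    ∀ t ∈ Set.Icc (0:ℝ) 1, 0 ≤ (1 + lam) - 4 * lam * t + 3 * lam * t ^ 2 := by
  rintro t ⟨ht0, ht1⟩
  have hr : (1 + lam) - 4 * lam * t + 3 * lam * t ^ 2 = 1 + lam * ((1 - t) * (1 - 3 * t)) := by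
    ring
  rw [hr]
  exact one_add_mul_nonneg h1 h2 (neg_one_third_le_one_sub_mul_one_sub_three_mul t)
    (one_sub_mul_one_sub_three_mul_le_one ht0 (by linarith))
end

section
/- For -2 ≤ λ ≤ 1, the function r(t) = (1-λ) + 6λ t - 6λ t² is nonnegative for all t ∈ [0,1]. -/
/-! With `s = t (1 - t) ∈ [0, 1/4]`, `r(t) = (1 - λ) + 6 λ s` is affine in `s`, hence a convex
combination of its values `1 - λ` at `s = 0` and `1 + λ / 2` at `s = 1/4`, both nonnegative
exactly when `-2 ≤ λ ≤ 1`. -/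

lemma mul_one_sub_le_quarter (t : ℝ) : t * (1 - t) ≤ 1 / 4 := by
  nlinarith [sq_nonneg (2 * t - 1)]

theorem stmt_12 (lam : ℝ) (h1 : -2 ≤ lam) (h2 : lam ≤ 1) :
    ∀ t ∈ Set.Icc (0:ℝ) 1, 0 ≤ (1 - lam) + 6 * lam * t - 6 * lam * t ^ 2 := by
  rintro t ⟨ht0, ht1⟩
  have hs0 : 0 ≤ t * (1 - t) := mul_nonneg ht0 (sub_nonneg.2 ht1)
  have hs1 : t * (1 - t) ≤ 1 / 4 := mul_one_sub_le_quarter t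
  calc (0 : ℝ)
      ≤ (1 - 4 * (t * (1 - t))) * (1 - lam) + 4 * (t * (1 - t)) * (1 + lam / 2) :=
        add_nonneg (mul_nonneg (by linarith) (by linarith)) (mul_nonneg (by linarith) (by linarith))
    _ = (1 - lam) + 6 * lam * t - 6 * lam * t ^ 2 := by ring
end

section
/- If 0 ≤ λ₁ ≤ 3, 0 ≤ λ₂ ≤ 3, and 0 ≤ λ₁ + λ₂ ≤ 3, then the function r(t) = λ₁ + 2(λ₂ - λ₁) t + 3(1 - λ₂) t² is nonnegative for all t ∈ [0,1]. -/
/-!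
In the Bernstein basis of degree 2 the weight polynomial reads
`r(t) = λ₁ (1 - t)² + 2 λ₂ t (1 - t) + (3 - λ₁ - λ₂) t²`,
and all three basis polynomials are nonnegative on `[0, 1]`.
-/

section Bernstein

variable {R : Type*} [CommRing R]

theorem granzotto_weight_eq_bernstein (l1 l2 t : R) :
    l1 + 2 * (l2 - l1) * t + 3 * (1 - l2) * t ^ 2 =
      l1 * (1 - t) ^ 2 + 2 * l2 * (t * (1 - t)) + (3 - (l1 + l2)) * t ^ 2 := by
  ring

theorem bernstein_quadratic_nonneg [PartialOrder R] [IsOrderedRing R] {a b c t : R}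
    (ha : 0 ≤ a) (hb : 0 ≤ b) (hc : 0 ≤ c) (ht0 : 0 ≤ t) (ht1 : t ≤ 1) :
    0 ≤ a * (1 - t) ^ 2 + 2 * b * (t * (1 - t)) + c * t ^ 2 := by
  have h1t : 0 ≤ 1 - t := sub_nonneg.2 ht1
  have h2b : 0 ≤ 2 * b := mul_nonneg zero_le_two hb
  exact add_nonneg (add_nonneg (mul_nonneg ha (pow_nonneg h1t 2))
    (mul_nonneg h2b (mul_nonneg ht0 h1t))) (mul_nonneg hc (pow_nonneg ht0 2))

end Bernstein

theorem stmt_13_general (l1 l2 : ℝ) (h1 : 0 ≤ l1) (h3 : 0 ≤ l2)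
    (h6 : l1 + l2 ≤ 3) :
    ∀ t ∈ Set.Icc (0:ℝ) 1, 0 ≤ l1 + 2 * (l2 - l1) * t + 3 * (1 - l2) * t ^ 2 := by
  rintro t ⟨ht0, ht1⟩
  rw [granzotto_weight_eq_bernstein]
  exact bernstein_quadratic_nonneg h1 h3 (sub_nonneg.2 h6) ht0 ht1

theorem stmt_13 (l1 l2 : ℝ) (h1 : 0 ≤ l1) (h2 : l1 ≤ 3) (h3 : 0 ≤ l2) (h4 : l2 ≤ 3)
    (h5 : 0 ≤ l1 + l2) (h6 : l1 + l2 ≤ 3) :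
    ∀ t ∈ Set.Icc (0:ℝ) 1, 0 ≤ l1 + 2 * (l2 - l1) * t + 3 * (1 - l2) * t ^ 2 :=
  stmt_13_general l1 l2 h1 h3 h6
end

section
/- There exist λ₁ ∈ [0,1] and λ₂ ∈ [-1,1] such that r(t) = λ₁ + 2(λ₂ - λ₁) t + 3(1 - λ₂) t² is negative for some t ∈ [0,1]. In particular, for λ₁ = 0.059 and λ₂ = -1, r takes negative values on [0,1]. -/
theorem stmt_14 :
    (∃ l1 ∈ Set.Icc (0:ℝ) 1, ∃ l2 ∈ Set.Icc (-1:ℝ) 1, ∃ t ∈ Set.Icc (0:ℝ) 1,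
      l1 + 2 * (l2 - l1) * t + 3 * (1 - l2) * t ^ 2 < 0) ∧
    (∃ t ∈ Set.Icc (0:ℝ) 1,
      (0.059 : ℝ) + 2 * ((-1) - 0.059) * t + 3 * (1 - (-1)) * t ^ 2 < 0) := by
  -- r(0.1) = 0.059 - 0.212 + 0.06 < 0
  obtain ⟨t, ht, hr⟩ : ∃ t ∈ Set.Icc (0:ℝ) 1,
      (0.059 : ℝ) + 2 * ((-1) - 0.059) * t + 3 * (1 - (-1)) * t ^ 2 < 0 :=
    ⟨0.1, by norm_num, by norm_num⟩
  exact ⟨⟨0.059, by norm_num, -1, by norm_num, t, ht, hr⟩, t, ht, hr⟩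
end

section
/- If -1 ≤ λ₁ ≤ 2, -1 ≤ λ₂ ≤ 2, and -2 ≤ λ₁ + λ₂ ≤ 1, then r(t) = (1 + λ₁) + 2(λ₂ - λ₁) t - 3λ₂ t² is nonnegative for all t ∈ [0,1]. -/
/-!
In the Bernstein basis `(1 - t)², 2t(1 - t), t²` of quadratics, the density weight is
`r(t) = (1 + λ₁)(1 - t)² + 2(1 + λ₂) t(1 - t) + (1 - λ₁ - λ₂) t²`. On `[0, 1]` the basis
polynomials are nonnegative, so `r ≥ 0` as soon as the three coefficients
`r(0) = 1 + λ₁`, `1 + λ₂` and `r(1) = 1 - λ₁ - λ₂` are.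
-/

lemma quadratic_bernstein_nonneg {a b c t : ℝ} (ha : 0 ≤ a) (hb : 0 ≤ b) (hc : 0 ≤ c)
    (ht₀ : 0 ≤ t) (ht₁ : t ≤ 1) :
    0 ≤ a * (1 - t) ^ 2 + 2 * b * t * (1 - t) + c * t ^ 2 := by
  have h1t : 0 ≤ 1 - t := sub_nonneg.2 ht₁
  positivity

lemma densityWeight_eq_bernstein (l1 l2 t : ℝ) :
    (1 + l1) + 2 * (l2 - l1) * t - 3 * l2 * t ^ 2
      = (1 + l1) * (1 - t) ^ 2 + 2 * (1 + l2) * t * (1 - t) + (1 - l1 - l2) * t ^ 2 := by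
  ring

theorem stmt_15_general (l1 l2 : ℝ) (h1 : -1 ≤ l1) (h3 : -1 ≤ l2)
    (h6 : l1 + l2 ≤ 1) :
    ∀ t ∈ Set.Icc (0:ℝ) 1, 0 ≤ (1 + l1) + 2 * (l2 - l1) * t - 3 * l2 * t ^ 2 := by
  rintro t ⟨ht₀, ht₁⟩
  rw [densityWeight_eq_bernstein]
  exact quadratic_bernstein_nonneg (by linarith) (by linarith) (by linarith) ht₀ ht₁

theorem stmt_15 (l1 l2 : ℝ) (h1 : -1 ≤ l1) (h2 : l1 ≤ 2) (h3 : -1 ≤ l2) (h4 : l2 ≤ 2)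
    (h5 : -2 ≤ l1 + l2) (h6 : l1 + l2 ≤ 1) :
    ∀ t ∈ Set.Icc (0:ℝ) 1, 0 ≤ (1 + l1) + 2 * (l2 - l1) * t - 3 * l2 * t ^ 2 :=
  stmt_15_general l1 l2 h1 h3 h6
end
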